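/- Let Q be a quaternion algebra over a field k of characteristic not 2, γ its canonical involution, z₀ a nonzero pure quaternion with z₀² = 0, and z an invertible pure quaternion such that Trd_Q(z z₀) ≠ 0. Then (z₀, z z₀) is an orthogonal k-basis of Qz₀ for the symmetric bilinear form b_{z₀,z}(z₁z₀, z₂z₀) = −Trd_Q(z₀ γ(z₁) z z₂), and with respect to this basis the form has diagonalization ⟨−Trd_Q(z z₀), Trd_Q(z z₀)·z²⟩. In particular b_{z₀,z} is isometric to the form ⟨−Trd_Q(z z₀)⟩ ⊗ ⟨1, z²⟩. -/

import Mathlib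

open Quaternion

/-!
Since `z₀` is pure, `γ(x z₀) = -z₀ γ(x)`, so `x z₀ = Trd(x z₀) + z₀ γ(x)`; multiplying on the left
by `z₀` and using `z₀² = 0` gives `z₀ x z₀ = Trd(x z₀) z₀`. Hence left multiplication by `z₀` kills
`z₀` but not `z z₀`, which makes `(z₀, z z₀)` linearly independent, while `Qz₀` lies in the kernel
of right multiplication by `z₀` and so has dimension at most `2`. The values of the form follow from
`z² ∈ k`, `γ(z) = -z` and `Trd(xy) = Trd(yx)`.
-/

open Module in
theorem LinearMap.two_mul_finrank_range_le_of_comp_self_eq_zero {K V : Type*} [DivisionRing K]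
    [AddCommGroup V] [Module K V] [FiniteDimensional K V] {f : V →ₗ[K] V} (hf : f ∘ₗ f = 0) :
    2 * finrank K (range f) ≤ finrank K V := by
  have hle : finrank K (range f) ≤ finrank K (ker f) :=
    Submodule.finrank_mono (range_le_ker_iff.mpr hf)
  have := f.finrank_range_add_finrank_ker
  omega

open Module in
theorem Submodule.span_pair_eq_of_le_of_finrank_le {K V : Type*} [DivisionRing K]
    [AddCommGroup V] [Module K V] {u v : V} (huv : LinearIndependent K ![u, v])
    {W : Submodule K V} [FiniteDimensional K W] (hle : span K {u, v} ≤ W)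
    (hW : finrank K W ≤ 2) : span K {u, v} = W := by
  have hspan : finrank K (span K {u, v}) = 2 := by
    rw [← Matrix.range_cons_cons_empty u v ![], finrank_span_eq_card huv, Fintype.card_fin]
  exact eq_of_le_of_finrank_le hle (hW.trans hspan.ge)

namespace QuaternionAlgebra

section CommRing

variable {R : Type*} [CommRing R] {a b : R}

theorem re_mul_comm (x y : ℍ[R, a, b]) : (x * y).re = (y * x).re := by
  simp only [re_mul]
  ring

theorem star_eq_neg_of_re_eq_zero {z : ℍ[R, a, b]} (hz : z.re = 0) : star z = -z := by
  ext <;> simp [hz]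

theorem sq_eq_coe_re_of_re_eq_zero {z : ℍ[R, a, b]} (hz : z.re = 0) : z ^ 2 = ↑(z ^ 2).re := by
  have h := mul_star_eq_coe z
  rwa [star_eq_neg_of_re_eq_zero hz, mul_neg, ← sq, QuaternionAlgebra.re_neg, coe_neg,
    neg_inj] at h

theorem re_mul_mul_self_of_re_eq_zero (x : ℍ[R, a, b]) {z : ℍ[R, a, b]} (hz : z.re = 0) :
    (x * z * z).re = x.re * (z ^ 2).re := by
  rw [mul_assoc, ← sq, sq_eq_coe_re_of_re_eq_zero hz, mul_coe_eq_smul, re_smul, smul_eq_mul,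
    re_coe, mul_comm]

theorem mul_mul_eq_two_re_smul_of_sq_eq_zero {z₀ : ℍ[R, a, b]} (hre : z₀.re = 0) (hsq : z₀ ^ 2 = 0)
    (x : ℍ[R, a, b]) : z₀ * (x * z₀) = (2 * (x * z₀).re) • z₀ := by
  have hstar : star (x * z₀) = -(z₀ * star x) := by
    rw [star_mul, star_eq_neg_of_re_eq_zero hre, neg_mul]
  have h := self_add_star' (x * z₀)
  rw [hstar, zero_mul, add_zero, ← sub_eq_add_neg, sub_eq_iff_eq_add] at h
  conv_lhs => rw [h]
  rw [mul_add, ← mul_assoc, ← sq, hsq, zero_mul, add_zero, mul_coe_eq_smul]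

end CommRing

section Field

variable {k : Type*} [Field k] {a b : k} {z₀ : ℍ[k, a, b]}

theorem linearIndependent_pair_mul_of_sq_eq_zero (hne : z₀ ≠ 0) (hre : z₀.re = 0)
    (hsq : z₀ ^ 2 = 0) {x : ℍ[k, a, b]} (hx : 2 * (x * z₀).re ≠ 0) :
    LinearIndependent k ![z₀, x * z₀] := by
  rw [LinearIndependent.pair_iff]
  intro s t hst
  have ht : t = 0 := by
    have h := congrArg (z₀ * ·) hst
    simpa only [mul_add, mul_smul_comm, ← sq, hsq, smul_zero, zero_add, mul_zero,
      mul_mul_eq_two_re_smul_of_sq_eq_zero hre hsq, smul_smul, smul_eq_zero, mul_eq_zero, hx, hne,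
      or_false] using h
  subst ht
  simpa [hne] using hst

open Module in
theorem finrank_range_mulRight_le_two (hsq : z₀ ^ 2 = 0) :
    finrank k (LinearMap.range (LinearMap.mulRight k z₀)) ≤ 2 := by
  have hcomp : LinearMap.mulRight k z₀ ∘ₗ LinearMap.mulRight k z₀ = 0 := by
    rw [← LinearMap.mulRight_mul, ← sq, hsq, LinearMap.mulRight_zero_eq_zero]
  have h := LinearMap.two_mul_finrank_range_le_of_comp_self_eq_zero hcomp
  rw [finrank_eq_four] at h
  omega

end Field

end QuaternionAlgebra

open QuaternionAlgebra in
theorem stmt4_general (k : Type) [Field k] (a b : k)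
    (z₀ : ℍ[k, a, b]) (hne : z₀ ≠ 0) (hpure : z₀.re = 0) (hsq : z₀ ^ 2 = 0)
    (z : ℍ[k, a, b]) (hzpure : z.re = 0)
    (ht : 2 * (z * z₀).re ≠ 0) :
    -- z² is the scalar (z^2).re
    z ^ 2 = algebraMap k ℍ[k, a, b] ((z ^ 2).re) ∧
    -- (z₀, z·z₀) is a basis of Qz₀
    LinearIndependent k ![z₀, z * z₀] ∧
    Submodule.span k {z₀, z * z₀} = LinearMap.range (LinearMap.mulRight k z₀) ∧
    -- orthogonality: b(1·z₀, z·z₀) = 0 = b(z·z₀, 1·z₀)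
    -(2 * (z₀ * z * z).re) = 0 ∧
    -(2 * (z₀ * star z * z).re) = 0 ∧
    -- diagonal entries: b(z₀,z₀) = −Trd(z z₀) and b(z z₀, z z₀) = Trd(z z₀)·z²
    -(2 * (z₀ * z).re) = -(2 * (z * z₀).re) ∧
    -(2 * (z₀ * star z * z * z).re) = (2 * (z * z₀).re) * (z ^ 2).re := by
  have hli := linearIndependent_pair_mul_of_sq_eq_zero hne hpure hsq ht
  have hle : Submodule.span k {z₀, z * z₀} ≤ LinearMap.range (LinearMap.mulRight k z₀) := by
    rw [Submodule.span_le, Set.insert_subset_iff, Set.singleton_subset_iff]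
    exact ⟨⟨1, one_mul z₀⟩, ⟨z, rfl⟩⟩
  have hstar := star_eq_neg_of_re_eq_zero hzpure
  refine ⟨sq_eq_coe_re_of_re_eq_zero hzpure, hli,
    Submodule.span_pair_eq_of_le_of_finrank_le hli hle (finrank_range_mulRight_le_two hsq),
    ?_, ?_, by rw [re_mul_comm], ?_⟩
  · rw [re_mul_mul_self_of_re_eq_zero _ hzpure, hpure]
    ring
  · rw [hstar, mul_neg, neg_mul, QuaternionAlgebra.re_neg,
      re_mul_mul_self_of_re_eq_zero _ hzpure, hpure]
    ring
  · rw [hstar, mul_neg, neg_mul, neg_mul, QuaternionAlgebra.re_neg,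
      re_mul_mul_self_of_re_eq_zero _ hzpure, re_mul_comm z₀ z]
    ring

/-- `Q = ℍ[k,a,b]`, `char k ≠ 2`, `z₀ ≠ 0` pure with `z₀² = 0`, `z`
an invertible pure quaternion with `Trd(z·z₀) ≠ 0` (where `Trd q = 2*q.re`). Then
`(z₀, z·z₀)` is an orthogonal basis of `Qz₀` for the symmetric bilinear form
`b(z₁z₀, z₂z₀) = −Trd(z₀ γ(z₁) z z₂)`, and in this basis the form is the diagonal
form `⟨−Trd(z z₀), Trd(z z₀)·z²⟩ = ⟨−Trd(z z₀)⟩ ⊗ ⟨1, z²⟩` (here `z² = (z^2).re` is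
a scalar since `z` is pure). -/
theorem stmt4 (k : Type) [Field k] (h2 : (2 : k) ≠ 0) (a b : k) (ha : a ≠ 0) (hb : b ≠ 0)
    (z₀ : ℍ[k, a, b]) (hne : z₀ ≠ 0) (hpure : z₀.re = 0) (hsq : z₀ ^ 2 = 0)
    (z : ℍ[k, a, b]) (hzpure : z.re = 0) (hzinv : IsUnit z)
    (ht : 2 * (z * z₀).re ≠ 0) :
    -- z² is the scalar (z^2).re
    z ^ 2 = algebraMap k ℍ[k, a, b] ((z ^ 2).re) ∧
    -- (z₀, z·z₀) is a basis of Qz₀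
    LinearIndependent k ![z₀, z * z₀] ∧
    Submodule.span k {z₀, z * z₀} = LinearMap.range (LinearMap.mulRight k z₀) ∧
    -- orthogonality: b(1·z₀, z·z₀) = 0 = b(z·z₀, 1·z₀)
    -(2 * (z₀ * z * z).re) = 0 ∧
    -(2 * (z₀ * star z * z).re) = 0 ∧
    -- diagonal entries: b(z₀,z₀) = −Trd(z z₀) and b(z z₀, z z₀) = Trd(z z₀)·z²
    -(2 * (z₀ * z).re) = -(2 * (z * z₀).re) ∧
    -(2 * (z₀ * star z * z * z).re) = (2 * (z * z₀).re) * (z ^ 2).re :=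
  stmt4_general k a b z₀ hne hpure hsq z hzpure ht
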